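/- (Cruse's Theorem) Let r ≤ n. An r×r symmetric latin rectangle L on the symbol set [n] can be extended to an n×n symmetric latin square on [n] if and only if: (i) e_ℓ ≥ 2r−n for every ℓ ∈ [n]; and (ii) |{ℓ ∈ [n] : e_ℓ ≡ n (mod 2)}| ≥ r. -/

import Mathlib

open Finset

/-- Number of occurrences of the symbol `ℓ` in the `m × m` array `A` (symbols in `Fin k`). -/
def occ {m k : ℕ} (A : Fin m → Fin m → Fin k) (ℓ : Fin k) : ℕ :=
  (Finset.univ.filter fun p : Fin m × Fin m => A p.1 p.2 = ℓ).card

/-- `A` is a symmetric latin square of order `n` on the symbol set `Fin n`: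
each symbol occurs exactly once in each row and in each column, and `A` is symmetric. -/
def IsSymLS {n : ℕ} (A : Fin n → Fin n → Fin n) : Prop :=
  (∀ i, Function.Bijective (A i)) ∧
  (∀ j, Function.Bijective fun i => A i j) ∧
  (∀ i j, A i j = A j i)

/-- `L` is an `r × r` symmetric latin rectangle on the symbol set `Fin n`:
each symbol occurs at most once in each row and in each column, and `L` is symmetric. -/
def IsSymLatinRect {r n : ℕ} (L : Fin r → Fin r → Fin n) : Prop :=
  (∀ i, Function.Injective (L i)) ∧
  (∀ j, Function.Injective fun i => L i j) ∧
  (∀ i j, L i j = L j i)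

/-- `A` extends `L`: `L` is the top-left `r × r` subarray of `A`. -/
def Extends {r n : ℕ} (h : r ≤ n) (L : Fin r → Fin r → Fin n)
    (A : Fin n → Fin n → Fin n) : Prop :=
  ∀ i j : Fin r, A (Fin.castLE h i) (Fin.castLE h j) = L i j

/-- The number of diagonal cells `A i i` with `i` beyond the first `r` rows holding symbol `ℓ`. -/
def diagTail {n : ℕ} (r : ℕ) (A : Fin n → Fin n → Fin n) (ℓ : Fin n) : ℕ :=
  (Finset.univ.filter fun i : Fin n => r ≤ (i : ℕ) ∧ A i i = ℓ).card

/-!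
Necessity. A symbol missing from a column of `L` occurs in that column of the square below `L`,
which has only `n - r` cells: this is (i). In a symmetric array a symbol occurs, modulo 2, as
often as it occurs on the diagonal, so a symbol whose count in `L` has the wrong parity occupies
one of the `n - r` diagonal cells below `L`: this is (ii).

Sufficiency. Border `L` by one row and column at a time, keeping (i) and (ii). The new diagonal
symbol `d` is taken of the wrong parity whenever (ii) would otherwise fail. The new column is a
perfect matching, found by Hall's theorem, between the symbols and the `r` columns they are missing
from together with `n - r` dummy positions, where the dummies are joined only to the symbols that
(i) does not force into the new column; Hall's condition is a double count of the pairs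
(symbol, column missing it).
-/

section Occurrences

variable {m r n : ℕ}

lemma occ_eq_card_cols {L : Fin r → Fin r → Fin n}
    (hcol : ∀ j, Function.Injective fun i => L i j) (ℓ : Fin n) :
    occ L ℓ = #{j | ∃ i, L i j = ℓ} := by
  rw [occ, ← card_image_of_injOn (f := Prod.snd)]
  · congr 1
    ext j
    simp
  · rintro ⟨i, j⟩ hp ⟨i', j'⟩ hp' (rfl : j = j')
    simp only [coe_filter, mem_univ, true_and, Set.mem_ofPred_eq] at hp hp'
    rw [hcol j (hp.trans hp'.symm)]

lemma occ_eq_sum (A : Fin m → Fin m → Fin n) (ℓ : Fin n) :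
    occ A ℓ = ∑ i, ∑ j, if A i j = ℓ then 1 else 0 := by
  rw [occ, card_filter, ← univ_product_univ, sum_product]

lemma sum_occ (A : Fin m → Fin m → Fin n) : ∑ ℓ, occ A ℓ = m * m := by
  simp only [occ]
  rw [← card_eq_sum_card_fiberwise fun _ _ => mem_univ _]
  simp

lemma occ_modEq_card_diag {A : Fin m → Fin m → Fin n} (hsym : ∀ i j, A i j = A j i)
    (ℓ : Fin n) : occ A ℓ ≡ #{i | A i i = ℓ} [MOD 2] := by
  set P := univ.filter fun p : Fin m × Fin m => A p.1 p.2 = ℓ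
  have hdiag : #(P.filter fun p => p.1 = p.2) = #{i | A i i = ℓ} := by
    refine card_bij' (fun p _ => p.1) (fun i _ => (i, i)) ?_ ?_ ?_ ?_ <;> aesop
  -- off the diagonal, `Prod.swap` pairs up the occurrences
  have hoff : (#(P.filter fun p => ¬ p.1 = p.2) : ZMod 2) = 0 := by
    rw [card_eq_sum_ones, Nat.cast_sum, Nat.cast_one]
    refine sum_involution (fun p _ => p.swap) (fun _ _ => by decide) ?_ ?_ ?_ <;>
      simp +contextual [P, hsym, eq_comm]
  rw [occ, ← card_filter_add_card_filter_not (p := fun p => p.1 = p.2), hdiag,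
    ← ZMod.natCast_eq_natCast_iff, Nat.cast_add, hoff, add_zero]

end Occurrences

section MissingCols

variable {r n : ℕ}

def missingCols (L : Fin r → Fin r → Fin n) (ℓ : Fin n) : Finset (Fin r) :=
  {j | ∀ i, L i j ≠ ℓ}

variable {L : Fin r → Fin r → Fin n}

lemma card_missingCols_add_occ (hcol : ∀ j, Function.Injective fun i => L i j) (ℓ : Fin n) :
    #(missingCols L ℓ) + occ L ℓ = r := by
  rw [occ_eq_card_cols hcol, add_comm, missingCols]
  simpa [not_exists] using
    card_filter_add_card_filter_not (s := univ) (p := fun j => ∃ i, L i j = ℓ)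

lemma card_filter_mem_missingCols_add (hcol : ∀ j, Function.Injective fun i => L i j)
    (j : Fin r) : #{ℓ | j ∈ missingCols L ℓ} + r = n := by
  have : ({ℓ | j ∈ missingCols L ℓ} : Finset (Fin n)) = (univ.image fun i => L i j)ᶜ := by
    ext ℓ
    simp [missingCols]
  have hrn := Fintype.card_le_of_injective _ (hcol j)
  rw [this, card_compl, card_image_of_injective _ (hcol j)]
  simp only [card_univ, Fintype.card_fin] at hrn ⊢
  omega

end MissingCols

lemma Fin.card_filter_le_val {n r : ℕ} (hrn : r ≤ n) : #{i : Fin n | r ≤ (i : ℕ)} = n - r := by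
  have := card_filter_add_card_filter_not (s := univ) (p := fun i : Fin n => r ≤ (i : ℕ))
  simp only [not_le, Fin.card_filter_val_lt, card_univ, Fintype.card_fin] at this
  omega

lemma sum_diagTail {n r : ℕ} (hrn : r ≤ n) (A : Fin n → Fin n → Fin n) :
    ∑ ℓ, diagTail r A ℓ = n - r := by
  rw [← Fin.card_filter_le_val hrn, card_eq_sum_card_fiberwise (f := fun i => A i i)
    (t := univ) fun _ _ => mem_univ _]
  simp only [diagTail, filter_filter]

section Necessity

variable {n r : ℕ} {hrn : r ≤ n} {L : Fin r → Fin r → Fin n} {A : Fin n → Fin n → Fin n}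

lemma two_mul_le_occ_add_of_extends (hL : IsSymLatinRect L) (hA : IsSymLS A)
    (hE : Extends hrn L A) (ℓ : Fin n) : 2 * r ≤ occ L ℓ + n := by
  let ρ (j : Fin r) : Fin n := (Equiv.ofBijective _ (hA.2.1 (Fin.castLE hrn j))).symm ℓ
  have hρ (j : Fin r) : A (ρ j) (Fin.castLE hrn j) = ℓ :=
    (Equiv.ofBijective _ (hA.2.1 (Fin.castLE hrn j))).apply_symm_apply ℓ
  have hmaps : ∀ j ∈ missingCols L ℓ, ρ j ∈ ({i | r ≤ (i : ℕ)} : Finset (Fin n)) := by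
    intro j hj
    simp only [missingCols, mem_filter, mem_univ, true_and] at hj ⊢
    by_contra! hlt
    exact hj ⟨ρ j, hlt⟩ (by rw [← hE]; exact hρ j)
  have hinj : Set.InjOn ρ (missingCols L ℓ) := fun j _ j' _ h =>
    Fin.castLE_injective hrn <| (hA.1 (ρ j)).injective <| by rw [hρ, h, hρ]
  have := card_le_card_of_injOn ρ hmaps hinj
  have := card_missingCols_add_occ hL.2.1 ℓ
  rw [Fin.card_filter_le_val hrn] at *
  omega

lemma occ_add_diagTail_modEq (hL : IsSymLatinRect L) (hA : IsSymLS A) (hE : Extends hrn L A)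
    (ℓ : Fin n) : occ L ℓ + diagTail r A ℓ ≡ n [MOD 2] := by
  have hhead : #{i : Fin n | ¬ r ≤ (i : ℕ) ∧ A i i = ℓ} = #{i | L i i = ℓ} := by
    rw [← card_map (Fin.castLEEmb hrn)]
    congr 1
    ext v
    simp only [mem_filter, mem_univ, true_and, not_le, mem_map, Fin.castLEEmb_apply]
    constructor
    · rintro ⟨hv, hA⟩
      exact ⟨⟨v, hv⟩, by rw [← hE]; exact hA, rfl⟩
    · rintro ⟨i, hi, rfl⟩
      exact ⟨i.isLt, by rw [hE, hi]⟩
  have hsplit :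
      #{i | A i i = ℓ} = #{i : Fin n | ¬ r ≤ (i : ℕ) ∧ A i i = ℓ} + diagTail r A ℓ := by
    rw [diagTail, ← card_filter_add_card_filter_not (s := {i | A i i = ℓ})
      (p := fun i : Fin n => r ≤ (i : ℕ)), add_comm, filter_filter, filter_filter]
    simp only [and_comm]
  have hocc : occ A ℓ = n := by
    rw [occ_eq_card_cols (fun j => hA.2.1 j |>.injective)]
    simp [fun j => (hA.2.1 j).surjective ℓ]
  calc occ L ℓ + diagTail r A ℓ ≡ #{i | L i i = ℓ} + diagTail r A ℓ [MOD 2] :=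
        (occ_modEq_card_diag hL.2.2 ℓ).add_right _
    _ = #{i | A i i = ℓ} := by rw [hsplit, hhead]
    _ ≡ occ A ℓ [MOD 2] := (occ_modEq_card_diag hA.2.2 ℓ).symm
    _ = n := hocc

lemma le_card_filter_occ_mod_two_of_extends (hL : IsSymLatinRect L) (hA : IsSymLS A)
    (hE : Extends hrn L A) : r ≤ #{ℓ | occ L ℓ % 2 = n % 2} := by
  have hsub : ({ℓ | ¬ occ L ℓ % 2 = n % 2} : Finset (Fin n)) ⊆
      ({ℓ | diagTail r A ℓ ≠ 0} : Finset (Fin n)) := by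
    intro ℓ
    have := occ_add_diagTail_modEq hL hA hE ℓ
    simp only [mem_filter, mem_univ, true_and, Nat.ModEq] at this ⊢
    omega
  have hcard : #{ℓ : Fin n | diagTail r A ℓ ≠ 0} ≤ n - r := by
    rw [← sum_diagTail hrn A, card_eq_sum_ones]
    calc ∑ ℓ ∈ {ℓ | diagTail r A ℓ ≠ 0}, 1 ≤ ∑ ℓ ∈ {ℓ | diagTail r A ℓ ≠ 0}, diagTail r A ℓ :=
          sum_le_sum fun ℓ hℓ => Nat.one_le_iff_ne_zero.mpr (mem_filter.mp hℓ).2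
      _ ≤ ∑ ℓ, diagTail r A ℓ := sum_le_sum_of_subset (subset_univ _)
  have := card_filter_add_card_filter_not (s := univ)
    (p := fun ℓ : Fin n => occ L ℓ % 2 = n % 2)
  rw [card_univ, Fintype.card_fin] at this
  have := card_le_card hsub
  omega

end Necessity

section Border

variable {r n : ℕ} {α : Type*}

def border (L : Fin r → Fin r → α) (σ : Fin r → α) (d : α) : Fin (r + 1) → Fin (r + 1) → α :=
  Fin.snoc (fun i => Fin.snoc (L i) (σ i)) (Fin.snoc σ d)

variable (L : Fin r → Fin r → α) (σ : Fin r → α) (d : α)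

@[simp] lemma border_castSucc_castSucc (i j : Fin r) :
    border L σ d i.castSucc j.castSucc = L i j := by
  simp [border]

@[simp] lemma border_castSucc_last (i : Fin r) : border L σ d i.castSucc (Fin.last r) = σ i := by
  simp [border]

@[simp] lemma border_last_castSucc (j : Fin r) : border L σ d (Fin.last r) j.castSucc = σ j := by
  simp [border]

@[simp] lemma border_last_last : border L σ d (Fin.last r) (Fin.last r) = d := by
  simp [border]

lemma border_symm (hsym : ∀ i j, L i j = L j i) (i j : Fin (r + 1)) :
    border L σ d i j = border L σ d j i := by
  induction i using Fin.lastCases <;> induction j using Fin.lastCases <;> simp [hsym]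

lemma isSymLatinRect_border {L : Fin r → Fin r → Fin n} {σ : Fin r → Fin n} {d : Fin n}
    (hL : IsSymLatinRect L) (hσ : Function.Injective σ) (hσL : ∀ i j, L i j ≠ σ j)
    (hσd : ∀ j, σ j ≠ d) : IsSymLatinRect (border L σ d) := by
  have hrow : ∀ i, Function.Injective (border L σ d i) := by
    intro i
    induction i using Fin.lastCases with
    | last =>
      simpa [border] using Fin.snoc_injective_of_injective hσ (by simpa [eq_comm] using hσd)
    | cast i =>
      simpa [border] using Fin.snoc_injective_of_injective (hL.1 i) fun ⟨j, hj⟩ =>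
        hσL j i (by rw [hL.2.2, hj])
  refine ⟨hrow, fun j => ?_, border_symm L σ d hL.2.2⟩
  simpa only [border_symm L σ d hL.2.2 _ j] using hrow j

lemma occ_border (L : Fin r → Fin r → Fin n) (σ : Fin r → Fin n) (d ℓ : Fin n) :
    occ (border L σ d) ℓ = occ L ℓ + 2 * #{j | σ j = ℓ} + if d = ℓ then 1 else 0 := by
  simp only [occ_eq_sum, card_filter, Fin.sum_univ_castSucc, border_castSucc_castSucc,
    border_castSucc_last, border_last_castSucc, border_last_last, sum_add_distrib]
  ring

lemma occ_border_self {L : Fin r → Fin r → Fin n} {σ : Fin r → Fin n} {d : Fin n}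
    (hσd : ∀ j, σ j ≠ d) : occ (border L σ d) d = occ L d + 1 := by
  simp [occ_border, hσd]

lemma occ_border_of_ne (L : Fin r → Fin r → Fin n) (σ : Fin r → Fin n) {d ℓ : Fin n}
    (hℓ : ℓ ≠ d) : occ (border L σ d) ℓ = occ L ℓ + 2 * #{j | σ j = ℓ} := by
  simp [occ_border, Ne.symm hℓ]

end Border

lemma exists_injective_covering_of_hall {α β γ : Type*} [Fintype α] [Fintype β]
    [Fintype γ] [DecidableEq β] (hcard : Fintype.card α = Fintype.card β + Fintype.card γ)
    (N : α → Finset β) (F : Finset α) (hF : ∀ Y ⊆ F, #Y ≤ #(Y.biUnion N))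
    (hall : ∀ Y : Finset α, #Y ≤ #(Y.biUnion N) + Fintype.card γ) :
    ∃ σ : β → α, Function.Injective σ ∧ (∀ b, b ∈ N (σ b)) ∧ ∀ a ∈ F, a ∈ Set.range σ := by
  classical
  -- `γ` is a set of dummy vertices, adjacent exactly to the elements outside `F`
  let t (a : α) : Finset (β ⊕ γ) := (N a).disjSum (if a ∈ F then ∅ else univ)
  have hallt : ∀ Y : Finset α, #Y ≤ #(Y.biUnion t) := by
    intro Y
    have hsub : (Y.biUnion N).disjSum (if Y ⊆ F then ∅ else univ : Finset γ) ⊆ Y.biUnion t := by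
      rintro (b | c) h
      · obtain ⟨a, ha, hb⟩ := mem_biUnion.mp (inl_mem_disjSum.mp h)
        exact mem_biUnion.mpr ⟨a, ha, by simpa [t] using hb⟩
      · split_ifs at h with hY
        · simp at h
        · obtain ⟨a, haY, haF⟩ := not_subset.mp hY
          exact mem_biUnion.mpr ⟨a, haY, by simp [t, haF]⟩
    refine le_trans ?_ (card_le_card hsub)
    rw [card_disjSum]
    split_ifs with hY
    · simpa using hF Y hY
    · simpa using hall Y
  obtain ⟨f, hf, hft⟩ := (all_card_le_biUnion_card_iff_exists_injective t).mp hallt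
  have hbij : Function.Bijective f :=
    (Fintype.bijective_iff_injective_and_card f).mpr ⟨hf, by simp [hcard]⟩
  let e := Equiv.ofBijective f hbij
  refine ⟨fun b => e.symm (.inl b), e.symm.injective.comp Sum.inl_injective, fun b => ?_,
    fun a ha => ?_⟩
  · have := hft (e.symm (.inl b))
    rw [show f (e.symm (.inl b)) = .inl b from e.apply_symm_apply _] at this
    simpa [t] using this
  · have := hft a
    rcases hfa : f a with b | c
    · exact ⟨b, e.symm_apply_eq.mpr hfa.symm⟩
    · simp [t, ha, hfa] at this

section HallCondition

variable {r n : ℕ} {L : Fin r → Fin r → Fin n}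

lemma sum_card_missingCols_le (hcol : ∀ j, Function.Injective fun i => L i j)
    (Z : Finset (Fin n)) :
    ∑ ℓ ∈ Z, #(missingCols L ℓ) ≤ #(Z.biUnion (missingCols L)) * (n - r) := by
  set T := Z.biUnion (missingCols L)
  calc ∑ ℓ ∈ Z, #(missingCols L ℓ)
      = ∑ ℓ ∈ Z, #(T.bipartiteAbove (fun ℓ j => j ∈ missingCols L ℓ) ℓ) := by
        refine sum_congr rfl fun ℓ hℓ => congrArg card ?_
        rw [bipartiteAbove, filter_mem_eq_inter, eq_comm, inter_eq_right]
        exact subset_biUnion_of_mem _ hℓ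
    _ = ∑ j ∈ T, #(Z.bipartiteBelow (fun ℓ j => j ∈ missingCols L ℓ) j) :=
        sum_card_bipartiteAbove_eq_sum_card_bipartiteBelow _
    _ ≤ ∑ _j ∈ T, (n - r) := sum_le_sum fun j _ => by
        have := card_filter_mem_missingCols_add hcol j
        have := card_le_card
          (filter_subset_filter (fun ℓ => j ∈ missingCols L ℓ) (subset_univ Z))
        rw [bipartiteBelow]
        omega
    _ = #T * (n - r) := by rw [sum_const, smul_eq_mul]

lemma card_le_card_biUnion_missingCols (hcol : ∀ j, Function.Injective fun i => L i j)
    {Y : Finset (Fin n)} (hY : ∀ ℓ ∈ Y, occ L ℓ + n ≤ 2 * r + 1)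
    (hY₁ : #{ℓ ∈ Y | occ L ℓ + n = 2 * r + 1} + r < n) :
    #Y ≤ #(Y.biUnion (missingCols L)) := by
  have hlow : #Y * (n - r) ≤
      ∑ ℓ ∈ Y, #(missingCols L ℓ) + #{ℓ ∈ Y | occ L ℓ + n = 2 * r + 1} := by
    rw [card_filter, ← sum_add_distrib, ← smul_eq_mul, ← sum_const]
    refine sum_le_sum fun ℓ hℓ => ?_
    have := card_missingCols_add_occ hcol ℓ
    have := hY ℓ hℓ
    split_ifs <;> omega
  have := sum_card_missingCols_le hcol Y
  have : #Y * (n - r) < (#(Y.biUnion (missingCols L)) + 1) * (n - r) := by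
    rw [add_one_mul]
    omega
  exact Nat.lt_succ_iff.mp (Nat.lt_of_mul_lt_mul_right this)

lemma card_lt_card_biUnion_missingCols_add (hcol : ∀ j, Function.Injective fun i => L i j)
    (hrn : r < n) (hocc : ∀ ℓ, 2 * r ≤ occ L ℓ + n) {d : Fin n} (hd : 2 * r < occ L d + n)
    {Z : Finset (Fin n)} (hdZ : d ∉ Z) :
    #Z < #(Z.biUnion (missingCols L)) + (n - r) := by
  have hZ : ∑ ℓ ∈ Z, #(missingCols L ℓ) + ∑ ℓ ∈ Z, occ L ℓ = #Z * r := by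
    rw [← sum_add_distrib, sum_congr rfl fun ℓ _ => card_missingCols_add_occ hcol ℓ, sum_const,
      smul_eq_mul]
  have hsplit : ∑ ℓ ∈ Z, occ L ℓ + ∑ ℓ ∈ Zᶜ, occ L ℓ = r * r := by
    rw [sum_add_sum_compl, sum_occ]
  have hcompl : ∑ _ℓ ∈ Zᶜ, (2 * r - n : ℤ) < ∑ ℓ ∈ Zᶜ, (occ L ℓ : ℤ) :=
    sum_lt_sum (fun ℓ _ => by have := hocc ℓ; omega) ⟨d, mem_compl.mpr hdZ, by omega⟩
  have hle := sum_card_missingCols_le hcol Z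
  rw [sum_const, card_compl, Fintype.card_fin, nsmul_eq_mul] at hcompl
  have hZn := card_le_univ Z
  rw [Fintype.card_fin] at hZn
  zify [hrn.le, hZn] at *
  -- `#Z * r - r * r + (n - #Z) * (2 * r - n) = (#Z - (n - r)) * (n - r)`
  have key : ((#Z : ℤ) - (n - r) - #(Z.biUnion (missingCols L))) * (n - r) < 0 := by linarith
  have := neg_of_mul_neg_left key (by omega)
  omega

lemma exists_new_column (hcol : ∀ j, Function.Injective fun i => L i j) (hrn : r < n)
    (hocc : ∀ ℓ, 2 * r ≤ occ L ℓ + n) {d : Fin n} (hd : 2 * r < occ L d + n)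
    (hd₁ : #{ℓ | ℓ ≠ d ∧ occ L ℓ + n = 2 * r + 1} + r < n) :
    ∃ σ : Fin r → Fin n, Function.Injective σ ∧ (∀ i j, L i j ≠ σ j) ∧ (∀ j, σ j ≠ d) ∧
      ∀ ℓ ≠ d, occ L ℓ + n ≤ 2 * r + 1 → ℓ ∈ Set.range σ := by
  let N (ℓ : Fin n) : Finset (Fin r) := {j | ℓ ≠ d ∧ j ∈ missingCols L ℓ}
  have hN (Y : Finset (Fin n)) : Y.biUnion N = (Y.erase d).biUnion (missingCols L) := by
    ext j
    simp only [N, mem_biUnion, mem_erase, mem_filter, mem_univ, true_and]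
    tauto
  obtain ⟨σ, hσ, hσN, hcover⟩ := exists_injective_covering_of_hall
    (γ := Fin (n - r)) (by simp only [Fintype.card_fin]; omega) N
    {ℓ | ℓ ≠ d ∧ occ L ℓ + n ≤ 2 * r + 1}
    (fun Y hY => by
      have hY' (ℓ) (hℓ : ℓ ∈ Y) := (mem_filter.mp (hY hℓ)).2
      rw [hN, erase_eq_of_notMem fun h => (hY' d h).1 rfl]
      refine card_le_card_biUnion_missingCols hcol (fun ℓ hℓ => (hY' ℓ hℓ).2) ?_
      refine lt_of_le_of_lt (Nat.add_le_add_right (card_le_card fun ℓ hℓ => ?_) r) hd₁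
      simp only [mem_filter, mem_univ, true_and] at hℓ ⊢
      exact ⟨(hY' ℓ hℓ.1).1, hℓ.2⟩)
    (fun Y => by
      have := card_lt_card_biUnion_missingCols_add hcol hrn hocc hd (notMem_erase d Y)
      have := pred_card_le_card_erase (s := Y) (a := d)
      rw [hN, Fintype.card_fin]
      omega)
  have hσN' (j : Fin r) : σ j ≠ d ∧ ∀ i, L i j ≠ σ j := by
    simpa [N, missingCols] using hσN j
  exact ⟨σ, hσ, fun i j => (hσN' j).2 i, fun j => (hσN' j).1,
    fun ℓ hℓd hℓ => hcover ℓ (by simp [hℓd, hℓ])⟩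

end HallCondition

section DiagonalSymbol

variable {r n : ℕ}

lemma exists_two_mul_lt_occ_add (hrn : r < n) (L : Fin r → Fin r → Fin n) :
    ∃ d, 2 * r < occ L d + n := by
  by_contra! h
  have hsum : ∑ ℓ, (occ L ℓ + n) ≤ ∑ _ℓ : Fin n, 2 * r := sum_le_sum fun ℓ _ => h ℓ
  simp only [sum_add_distrib, sum_occ, sum_const, card_univ, Fintype.card_fin, smul_eq_mul] at hsum
  nlinarith

variable {L : Fin r → Fin r → Fin n}

lemma mod_two_eq_of_forall_occ_mod_two (h : ∀ ℓ, occ L ℓ % 2 = n % 2) : r % 2 = n % 2 := by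
  have hsum : ((r * r : ℕ) : ZMod 2) = n * n := by
    rw [← sum_occ L, Nat.cast_sum]
    simp [(ZMod.natCast_eq_natCast_iff' _ n 2).mpr (h _)]
  have hsq (x : ZMod 2) : x * x = x := by fin_cases x <;> rfl
  rw [Nat.cast_mul, hsq, hsq] at hsum
  exact (ZMod.natCast_eq_natCast_iff' r n 2).mp hsum

lemma exists_diag_symbol (hrn : r < n) (hocc : ∀ ℓ, 2 * r ≤ occ L ℓ + n)
    (hS : r ≤ #{ℓ | occ L ℓ % 2 = n % 2}) :
    ∃ d, 2 * r < occ L d + n ∧ #{ℓ | ℓ ≠ d ∧ occ L ℓ + n = 2 * r + 1} + r < n ∧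
      (occ L d % 2 = n % 2 → r + 2 ≤ #{ℓ | occ L ℓ % 2 = n % 2}) := by
  have hS' := card_filter_add_card_filter_not (s := univ)
    (p := fun ℓ : Fin n => occ L ℓ % 2 = n % 2)
  rw [card_univ, Fintype.card_fin] at hS'
  by_cases hall : ∀ ℓ, occ L ℓ % 2 = n % 2
  · obtain ⟨d, hd⟩ := exists_two_mul_lt_occ_add hrn L
    have hnr := mod_two_eq_of_forall_occ_mod_two hall
    have hS₀ : #{ℓ : Fin n | ¬ occ L ℓ % 2 = n % 2} = 0 := by simp [hall]
    have hF₀ : #{ℓ | ℓ ≠ d ∧ occ L ℓ + n = 2 * r + 1} = 0 := by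
      simp only [card_eq_zero, filter_eq_empty_iff]
      intro ℓ _ ⟨_, h⟩
      have := hall ℓ
      omega
    refine ⟨d, hd, by omega, fun _ => by omega⟩
  · obtain ⟨d, hd⟩ := not_forall.mp hall
    have hsub : insert d ({ℓ | ℓ ≠ d ∧ occ L ℓ + n = 2 * r + 1} : Finset (Fin n)) ⊆
        ({ℓ | ¬ occ L ℓ % 2 = n % 2} : Finset (Fin n)) := by
      intro ℓ hℓ
      simp only [mem_insert, mem_filter, mem_univ, true_and] at hℓ ⊢
      rcases hℓ with rfl | ⟨_, h⟩
      · exact hd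
      · omega
    have := card_le_card hsub
    rw [card_insert_of_notMem (by simp)] at this
    exact ⟨d, by have := hocc d; omega, by omega, fun h => absurd h hd⟩

end DiagonalSymbol

section BorderConditions

variable {r n : ℕ} {L : Fin r → Fin r → Fin n} {σ : Fin r → Fin n} {d : Fin n}

lemma two_mul_le_occ_border_add (hocc : ∀ ℓ, 2 * r ≤ occ L ℓ + n) (hd : 2 * r < occ L d + n)
    (hσd : ∀ j, σ j ≠ d) (hcover : ∀ ℓ ≠ d, occ L ℓ + n ≤ 2 * r + 1 → ℓ ∈ Set.range σ)
    (ℓ : Fin n) : 2 * (r + 1) ≤ occ (border L σ d) ℓ + n := by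
  obtain rfl | hℓ := eq_or_ne ℓ d
  · rw [occ_border_self hσd]
    omega
  rw [occ_border_of_ne L σ hℓ]
  have := hocc ℓ
  by_cases hlow : occ L ℓ + n ≤ 2 * r + 1
  · obtain ⟨j, hj⟩ := hcover ℓ hℓ hlow
    have : 0 < #{j | σ j = ℓ} := card_pos.mpr ⟨j, by simp [hj]⟩
    omega
  · omega

lemma le_card_filter_occ_border_mod_two (hσd : ∀ j, σ j ≠ d)
    (hS : r ≤ #{ℓ | occ L ℓ % 2 = n % 2})
    (hdS : occ L d % 2 = n % 2 → r + 2 ≤ #{ℓ | occ L ℓ % 2 = n % 2}) :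
    r + 1 ≤ #{ℓ | occ (border L σ d) ℓ % 2 = n % 2} := by
  have hsame {ℓ} (hℓ : ℓ ≠ d) : occ (border L σ d) ℓ % 2 = occ L ℓ % 2 := by
    rw [occ_border_of_ne L σ hℓ]
    omega
  by_cases hdpar : occ L d % 2 = n % 2
  · have hsub : ({ℓ | occ L ℓ % 2 = n % 2} : Finset (Fin n)).erase d ⊆
        ({ℓ | occ (border L σ d) ℓ % 2 = n % 2} : Finset (Fin n)) := by
      intro ℓ hℓ
      simp only [mem_erase, mem_filter, mem_univ, true_and] at hℓ ⊢
      rw [hsame hℓ.1]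
      exact hℓ.2
    have := card_le_card hsub
    have := pred_card_le_card_erase (s := {ℓ | occ L ℓ % 2 = n % 2}) (a := d)
    have := hdS hdpar
    omega
  · have hsub : insert d ({ℓ | occ L ℓ % 2 = n % 2} : Finset (Fin n)) ⊆
        ({ℓ | occ (border L σ d) ℓ % 2 = n % 2} : Finset (Fin n)) := by
      intro ℓ hℓ
      simp only [mem_insert, mem_filter, mem_univ, true_and] at hℓ ⊢
      obtain rfl | hne := eq_or_ne ℓ d
      · rw [occ_border_self hσd]
        omega
      · rw [hsame hne]
        exact hℓ.resolve_left hne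
    have := card_le_card hsub
    rw [card_insert_of_notMem (by simpa using hdpar)] at this
    omega

lemma exists_border_extension (hrn : r < n) (hL : IsSymLatinRect L)
    (hocc : ∀ ℓ, 2 * r ≤ occ L ℓ + n) (hS : r ≤ #{ℓ | occ L ℓ % 2 = n % 2}) :
    ∃ σ d, IsSymLatinRect (border L σ d) ∧ (∀ ℓ, 2 * (r + 1) ≤ occ (border L σ d) ℓ + n) ∧
      r + 1 ≤ #{ℓ | occ (border L σ d) ℓ % 2 = n % 2} := by
  obtain ⟨d, hd, hd₁, hdS⟩ := exists_diag_symbol hrn hocc hS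
  obtain ⟨σ, hσ, hσL, hσd, hcover⟩ := exists_new_column hL.2.1 hrn hocc hd hd₁
  exact ⟨σ, d, isSymLatinRect_border hL hσ hσL hσd,
    two_mul_le_occ_border_add hocc hd hσd hcover, le_card_filter_occ_border_mod_two hσd hS hdS⟩

end BorderConditions

lemma exists_isSymLS_extends {r n : ℕ} (hrn : r ≤ n) {L : Fin r → Fin r → Fin n}
    (hL : IsSymLatinRect L) (hocc : ∀ ℓ, 2 * r ≤ occ L ℓ + n)
    (hS : r ≤ #{ℓ | occ L ℓ % 2 = n % 2}) :
    ∃ A : Fin n → Fin n → Fin n, IsSymLS A ∧ Extends hrn L A := by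
  obtain ⟨k, hk⟩ : ∃ k, n - r = k := ⟨_, rfl⟩
  induction k generalizing r with
  | zero =>
    obtain rfl : r = n := by omega
    exact ⟨L, ⟨fun i => Finite.injective_iff_bijective.mp (hL.1 i),
      fun j => Finite.injective_iff_bijective.mp (hL.2.1 j), hL.2.2⟩, fun i j => by simp⟩
  | succ k ih =>
    obtain ⟨σ, d, hL', hocc', hS'⟩ := exists_border_extension (by omega) hL hocc hS
    obtain ⟨A, hA, hE⟩ := ih (by omega) hL' hocc' hS' (by omega)
    exact ⟨A, hA, fun i j => by simpa using hE i.castSucc j.castSucc⟩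

/-- Cruse's theorem. -/
theorem cruse (n r : ℕ) (hrn : r ≤ n)
    (L : Fin r → Fin r → Fin n) (hL : IsSymLatinRect L) :
    (∃ A : Fin n → Fin n → Fin n, IsSymLS A ∧ Extends hrn L A) ↔
      (∀ ℓ, 2 * r ≤ occ L ℓ + n) ∧
      r ≤ (Finset.univ.filter fun ℓ : Fin n => occ L ℓ % 2 = n % 2).card := by
  constructor
  · rintro ⟨A, hA, hE⟩
    exact ⟨two_mul_le_occ_add_of_extends hL hA hE, le_card_filter_occ_mod_two_of_extends hL hA hE⟩
  · rintro ⟨hocc, hS⟩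
    exact exists_isSymLS_extends hrn hL hocc hS
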